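/- Suppose Φ is 𝒟-pullback asymptotically compact in X. Let D ∈ 𝒟 be a family with each D(ω₁,ω₂) closed in X, and suppose that for every ω₁ ∈ Ω₁ and ω₂ ∈ Ω₂ there exists t₀ = t₀(D,ω₁,ω₂) ≥ 0 such that Φ(t,θ₁(−t)ω₁,θ₂(−t)ω₂,D(θ₁(−t)ω₁,θ₂(−t)ω₂)) ⊆ D(ω₁,ω₂) for all t ≥ t₀. Then the Ω-limit set family Ω(D) is invariant under Φ, i.e. Φ(t,ω₁,ω₂,Ω(D,ω₁,ω₂)) = Ω(D,θ₁(t)ω₁,θ₂(t)ω₂) for all t ≥ 0, and moreover Ω(D,ω₁,ω₂) ⊆ D(ω₁,ω₂) for all ω₁ ∈ Ω₁ and ω₂ ∈ Ω₂. -/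

import Mathlib

open MeasureTheory Filter Set Topology
open scoped ENNReal

namespace RDS

/-- A group of transformations of `α` parametrized by `ℝ`. -/
def IsGroupAction {α : Type*} (θ : ℝ → α → α) : Prop :=
  (∀ a, θ 0 a = a) ∧ ∀ s t : ℝ, ∀ a, θ (s + t) a = θ t (θ s a)

variable {Ω₁ Ω₂ X : Type*} [MetricSpace X] [MeasurableSpace X] [MeasurableSpace Ω₂]

/-- A continuous cocycle on `X` over the parametric dynamical systems
`(Ω₁, θ₁)` and `(Ω₂, ℱ₂, P, θ₂)` (Definition 2.1). -/
structure IsCocycle (θ₁ : ℝ → Ω₁ → Ω₁) (θ₂ : ℝ → Ω₂ → Ω₂)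
    (Φ : ℝ → Ω₁ → Ω₂ → X → X) : Prop where
  measurable : ∀ ω₁ : Ω₁,
    Measurable fun p : {t : ℝ // 0 ≤ t} × Ω₂ × X => Φ p.1.1 ω₁ p.2.1 p.2.2
  map_zero : ∀ (ω₁ : Ω₁) (ω₂ : Ω₂) (x : X), Φ 0 ω₁ ω₂ x = x
  cocycle : ∀ t τ : ℝ, 0 ≤ t → 0 ≤ τ → ∀ (ω₁ : Ω₁) (ω₂ : Ω₂) (x : X),
    Φ (t + τ) ω₁ ω₂ x = Φ t (θ₁ τ ω₁) (θ₂ τ ω₂) (Φ τ ω₁ ω₂ x)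
  continuous : ∀ t : ℝ, 0 ≤ t → ∀ (ω₁ : Ω₁) (ω₂ : Ω₂),
    Continuous fun x : X => Φ t ω₁ ω₂ x

/-- A complete orbit of the cocycle `Φ` (Definition 2.9). -/
def IsCompleteOrbit (θ₁ : ℝ → Ω₁ → Ω₁) (θ₂ : ℝ → Ω₂ → Ω₂)
    (Φ : ℝ → Ω₁ → Ω₂ → X → X) (ψ : ℝ → Ω₁ → Ω₂ → X) : Prop :=
  ∀ t τ : ℝ, 0 ≤ t → ∀ (ω₁ : Ω₁) (ω₂ : Ω₂),
    Φ t (θ₁ τ ω₁) (θ₂ τ ω₂) (ψ τ ω₁ ω₂) = ψ (t + τ) ω₁ ω₂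

/-- A `𝒟`-complete orbit of `Φ`. -/
def IsDCompleteOrbit (θ₁ : ℝ → Ω₁ → Ω₁) (θ₂ : ℝ → Ω₂ → Ω₂)
    (Φ : ℝ → Ω₁ → Ω₂ → X → X) (𝒟 : Set (Ω₁ → Ω₂ → Set X))
    (ψ : ℝ → Ω₁ → Ω₂ → X) : Prop :=
  IsCompleteOrbit θ₁ θ₂ Φ ψ ∧
    ∃ D ∈ 𝒟, ∀ (t : ℝ) (ω₁ : Ω₁) (ω₂ : Ω₂), ψ t ω₁ ω₂ ∈ D (θ₁ t ω₁) (θ₂ t ω₂)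

/-- Positive invariance of a family under `Φ`. -/
def PositivelyInvariant (θ₁ : ℝ → Ω₁ → Ω₁) (θ₂ : ℝ → Ω₂ → Ω₂)
    (Φ : ℝ → Ω₁ → Ω₂ → X → X) (B : Ω₁ → Ω₂ → Set X) : Prop :=
  ∀ t : ℝ, 0 ≤ t → ∀ (ω₁ : Ω₁) (ω₂ : Ω₂),
    Φ t ω₁ ω₂ '' B ω₁ ω₂ ⊆ B (θ₁ t ω₁) (θ₂ t ω₂)

/-- Invariance of a family under `Φ`. -/
def Invariant (θ₁ : ℝ → Ω₁ → Ω₁) (θ₂ : ℝ → Ω₂ → Ω₂)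
    (Φ : ℝ → Ω₁ → Ω₂ → X → X) (B : Ω₁ → Ω₂ → Set X) : Prop :=
  ∀ t : ℝ, 0 ≤ t → ∀ (ω₁ : Ω₁) (ω₂ : Ω₂),
    Φ t ω₁ ω₂ '' B ω₁ ω₂ = B (θ₁ t ω₁) (θ₂ t ω₂)

/-- Quasi-invariance of a family under `Φ`. -/
def QuasiInvariant (θ₁ : ℝ → Ω₁ → Ω₁) (θ₂ : ℝ → Ω₂ → Ω₂)
    (Φ : ℝ → Ω₁ → Ω₂ → X → X) (B : Ω₁ → Ω₂ → Set X) : Prop :=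
  ∀ y : Ω₁ → Ω₂ → X, (∀ (ω₁ : Ω₁) (ω₂ : Ω₂), y ω₁ ω₂ ∈ B ω₁ ω₂) →
    ∃ ψ : ℝ → Ω₁ → Ω₂ → X, IsCompleteOrbit θ₁ θ₂ Φ ψ ∧
      (∀ (ω₁ : Ω₁) (ω₂ : Ω₂), ψ 0 ω₁ ω₂ = y ω₁ ω₂) ∧
      ∀ (t : ℝ) (ω₁ : Ω₁) (ω₂ : Ω₂), ψ t ω₁ ω₂ ∈ B (θ₁ t ω₁) (θ₂ t ω₂)

/-- The Ω-limit set of a family `B` (Definition 2.13). -/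
def omegaLimit (θ₁ : ℝ → Ω₁ → Ω₁) (θ₂ : ℝ → Ω₂ → Ω₂)
    (Φ : ℝ → Ω₁ → Ω₂ → X → X) (B : Ω₁ → Ω₂ → Set X) (ω₁ : Ω₁) (ω₂ : Ω₂) : Set X :=
  ⋂ τ ∈ Ici (0 : ℝ), closure (⋃ t ∈ Ici τ,
    Φ t (θ₁ (-t) ω₁) (θ₂ (-t) ω₂) '' B (θ₁ (-t) ω₁) (θ₂ (-t) ω₂))

/-- `𝒟` is a collection of families of nonempty subsets of `X`. -/
def FamiliesOfNonemptySets (𝒟 : Set (Ω₁ → Ω₂ → Set X)) : Prop :=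
  ∀ D ∈ 𝒟, ∀ (ω₁ : Ω₁) (ω₂ : Ω₂), (D ω₁ ω₂).Nonempty

/-- Neighborhood closedness of the collection `𝒟` (Definition 2.5). -/
def NeighborhoodClosed (𝒟 : Set (Ω₁ → Ω₂ → Set X)) : Prop :=
  ∀ D ∈ 𝒟, ∃ ε : ℝ, 0 < ε ∧ ∀ B : Ω₁ → Ω₂ → Set X,
    (∀ (ω₁ : Ω₁) (ω₂ : Ω₂), (B ω₁ ω₂).Nonempty ∧
      B ω₁ ω₂ ⊆ Metric.thickening ε (D ω₁ ω₂)) → B ∈ 𝒟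

/-- Inclusion closedness of the collection `𝒟`. -/
def InclusionClosed (𝒟 : Set (Ω₁ → Ω₂ → Set X)) : Prop :=
  ∀ D ∈ 𝒟, ∀ B : Ω₁ → Ω₂ → Set X,
    (∀ (ω₁ : Ω₁) (ω₂ : Ω₂), (B ω₁ ω₂).Nonempty ∧ B ω₁ ω₂ ⊆ D ω₁ ω₂) → B ∈ 𝒟

/-- `𝒟`-pullback asymptotic compactness of `Φ` (Definition 2.16). -/
def AsymptoticallyCompact (θ₁ : ℝ → Ω₁ → Ω₁) (θ₂ : ℝ → Ω₂ → Ω₂)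
    (Φ : ℝ → Ω₁ → Ω₂ → X → X) (𝒟 : Set (Ω₁ → Ω₂ → Set X)) : Prop :=
  ∀ (ω₁ : Ω₁) (ω₂ : Ω₂), ∀ B ∈ 𝒟, ∀ (t : ℕ → ℝ) (x : ℕ → X),
    Tendsto t atTop atTop →
    (∀ n, x n ∈ B (θ₁ (-t n) ω₁) (θ₂ (-t n) ω₂)) →
    ∃ (φ : ℕ → ℕ) (y : X), StrictMono φ ∧
      Tendsto (fun n => Φ (t (φ n)) (θ₁ (-t (φ n)) ω₁) (θ₂ (-t (φ n)) ω₂) (x (φ n)))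
        atTop (𝓝 y)

/-- The Hausdorff semi-metric `d(C,B) = sup_{x ∈ C} inf_{b ∈ B} d(x,b)`,
valued in `ℝ≥0∞`. -/
noncomputable def hausSemidist (C B : Set X) : ℝ≥0∞ :=
  ⨆ x ∈ C, EMetric.infEdist x B

/-- The family `A` pullback attracts the family `B` under `Φ`. -/
def Attracts (θ₁ : ℝ → Ω₁ → Ω₁) (θ₂ : ℝ → Ω₂ → Ω₂)
    (Φ : ℝ → Ω₁ → Ω₂ → X → X) (B A : Ω₁ → Ω₂ → Set X) : Prop :=
  ∀ (ω₁ : Ω₁) (ω₂ : Ω₂),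
    Tendsto (fun t : ℝ => hausSemidist
        (Φ t (θ₁ (-t) ω₁) (θ₂ (-t) ω₂) '' B (θ₁ (-t) ω₁) (θ₂ (-t) ω₂)) (A ω₁ ω₂))
      atTop (𝓝 0)

/-- A `𝒟`-pullback absorbing set for `Φ` (Definition 2.15). -/
def IsAbsorbingSet (θ₁ : ℝ → Ω₁ → Ω₁) (θ₂ : ℝ → Ω₂ → Ω₂)
    (Φ : ℝ → Ω₁ → Ω₂ → X → X) (𝒟 : Set (Ω₁ → Ω₂ → Set X))
    (K : Ω₁ → Ω₂ → Set X) : Prop :=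
  K ∈ 𝒟 ∧ ∀ (ω₁ : Ω₁) (ω₂ : Ω₂), ∀ B ∈ 𝒟, ∃ T : ℝ, 0 < T ∧ ∀ t : ℝ, T ≤ t →
    Φ t (θ₁ (-t) ω₁) (θ₂ (-t) ω₂) '' B (θ₁ (-t) ω₁) (θ₂ (-t) ω₂) ⊆ K ω₁ ω₂

/-- A closed measurable (w.r.t. the `P`-completion of `ℱ₂`) `𝒟`-pullback
absorbing set for `Φ`. -/
def IsClosedMeasurableAbsorbingSet (θ₁ : ℝ → Ω₁ → Ω₁) (θ₂ : ℝ → Ω₂ → Ω₂)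
    (Φ : ℝ → Ω₁ → Ω₂ → X → X) (P : Measure Ω₂) (𝒟 : Set (Ω₁ → Ω₂ → Set X))
    (K : Ω₁ → Ω₂ → Set X) : Prop :=
  IsAbsorbingSet θ₁ θ₂ Φ 𝒟 K ∧
    (∀ (ω₁ : Ω₁) (ω₂ : Ω₂), IsClosed (K ω₁ ω₂) ∧ (K ω₁ ω₂).Nonempty) ∧
    ∀ (ω₁ : Ω₁) (x : X), NullMeasurable (fun ω₂ => Metric.infDist x (K ω₁ ω₂)) P

/-- A `𝒟`-pullback attractor for `Φ` (Definition 2.17). -/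
structure IsPullbackAttractor (θ₁ : ℝ → Ω₁ → Ω₁) (θ₂ : ℝ → Ω₂ → Ω₂)
    (Φ : ℝ → Ω₁ → Ω₂ → X → X) (P : Measure Ω₂) (𝒟 : Set (Ω₁ → Ω₂ → Set X))
    (A : Ω₁ → Ω₂ → Set X) : Prop where
  mem : A ∈ 𝒟
  compact : ∀ (ω₁ : Ω₁) (ω₂ : Ω₂), IsCompact (A ω₁ ω₂)
  measurable : ∀ (ω₁ : Ω₁) (x : X),
    NullMeasurable (fun ω₂ => Metric.infDist x (A ω₁ ω₂)) P
  invariant : Invariant θ₁ θ₂ Φ A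
  attracts : ∀ B ∈ 𝒟, Attracts θ₁ θ₂ Φ B A

/-! The continuous map `Φ(t, ω)` sends the closure of a pullback orbit of `ω` into the closure of a
pullback orbit of `θ(t)ω`, by the cocycle property; this gives `Φ(t, ω) Ω(D, ω) ⊆ Ω(D, θ(t)ω)`.
Conversely, a point `y = lim Φ(sₙ, θ(-sₙ)θ(t)ω, xₙ)` of `Ω(D, θ(t)ω)` is the limit of
`Φ(t, ω) Φ(sₙ - t, θ(-(sₙ - t))ω, xₙ)`; by asymptotic compactness a subsequence of the inner terms
converges to some `z ∈ Ω(D, ω)`, and then `Φ(t, ω) z = y`. Finally `Ω(D) ⊆ D` because the late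
pullback orbits of `D` lie in the closed set `D`. -/

theorem IsGroupAction.apply_apply {α : Type*} {θ : ℝ → α → α} (h : IsGroupAction θ)
    (s t : ℝ) (a : α) : θ t (θ s a) = θ (s + t) a :=
  (h.2 s t a).symm

theorem IsGroupAction.neg_apply_apply {α : Type*} {θ : ℝ → α → α} (h : IsGroupAction θ)
    (s t : ℝ) (a : α) : θ (-s) (θ t a) = θ (-(s - t)) a := by
  rw [h.apply_apply]
  ring_nf

section PullbackOrbit

variable {Ω₁ Ω₂ X : Type*} {θ₁ : ℝ → Ω₁ → Ω₁} {θ₂ : ℝ → Ω₂ → Ω₂}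
  {Φ : ℝ → Ω₁ → Ω₂ → X → X} {B : Ω₁ → Ω₂ → Set X} {ω₁ : Ω₁} {ω₂ : Ω₂} {y : X}

def pullbackOrbit (θ₁ : ℝ → Ω₁ → Ω₁) (θ₂ : ℝ → Ω₂ → Ω₂) (Φ : ℝ → Ω₁ → Ω₂ → X → X)
    (B : Ω₁ → Ω₂ → Set X) (τ : ℝ) (ω₁ : Ω₁) (ω₂ : Ω₂) : Set X :=
  ⋃ t ∈ Ici τ, Φ t (θ₁ (-t) ω₁) (θ₂ (-t) ω₂) '' B (θ₁ (-t) ω₁) (θ₂ (-t) ω₂)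

theorem mem_pullbackOrbit {τ : ℝ} :
    y ∈ pullbackOrbit θ₁ θ₂ Φ B τ ω₁ ω₂ ↔ ∃ t, τ ≤ t ∧
      ∃ x ∈ B (θ₁ (-t) ω₁) (θ₂ (-t) ω₂), Φ t (θ₁ (-t) ω₁) (θ₂ (-t) ω₂) x = y := by
  simp [pullbackOrbit]

theorem pullbackOrbit_antitone :
    Antitone fun τ => pullbackOrbit θ₁ θ₂ Φ B τ ω₁ ω₂ :=
  fun _ _ hτ => biUnion_subset_biUnion_left (Ici_subset_Ici.2 hτ)

variable [MetricSpace X]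

theorem omegaLimit_subset_closure_pullbackOrbit (τ : ℝ) :
    omegaLimit θ₁ θ₂ Φ B ω₁ ω₂ ⊆ closure (pullbackOrbit θ₁ θ₂ Φ B τ ω₁ ω₂) :=
  (biInter_subset_of_mem (mem_Ici.2 (le_max_right τ 0))).trans
    (closure_mono (pullbackOrbit_antitone (le_max_left τ 0)))

theorem omegaLimit_subset_of_pullbackOrbit_subset {C : Set X} {τ : ℝ} (hC : IsClosed C)
    (h : pullbackOrbit θ₁ θ₂ Φ B τ ω₁ ω₂ ⊆ C) : omegaLimit θ₁ θ₂ Φ B ω₁ ω₂ ⊆ C :=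
  (omegaLimit_subset_closure_pullbackOrbit τ).trans (closure_minimal h hC)

theorem mem_omegaLimit_of_tendsto {s : ℕ → ℝ} {x : ℕ → X} (hs : Tendsto s atTop atTop)
    (hx : ∀ n, x n ∈ B (θ₁ (-s n) ω₁) (θ₂ (-s n) ω₂))
    (hy : Tendsto (fun n => Φ (s n) (θ₁ (-s n) ω₁) (θ₂ (-s n) ω₂) (x n)) atTop (𝓝 y)) :
    y ∈ omegaLimit θ₁ θ₂ Φ B ω₁ ω₂ := by
  refine mem_iInter₂.2 fun τ _ => mem_closure_of_tendsto hy ?_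
  filter_upwards [hs.eventually_ge_atTop τ] with n hn
  exact mem_pullbackOrbit.2 ⟨s n, hn, x n, hx n, rfl⟩

theorem exists_tendsto_of_mem_omegaLimit (hy : y ∈ omegaLimit θ₁ θ₂ Φ B ω₁ ω₂) (T : ℝ) :
    ∃ (s : ℕ → ℝ) (x : ℕ → X), (∀ n, T ≤ s n) ∧ Tendsto s atTop atTop ∧
      (∀ n, x n ∈ B (θ₁ (-s n) ω₁) (θ₂ (-s n) ω₂)) ∧
      Tendsto (fun n => Φ (s n) (θ₁ (-s n) ω₁) (θ₂ (-s n) ω₂) (x n)) atTop (𝓝 y) := by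
  have approx (n : ℕ) : ∃ s, T + n ≤ s ∧ ∃ x ∈ B (θ₁ (-s) ω₁) (θ₂ (-s) ω₂),
      dist (Φ s (θ₁ (-s) ω₁) (θ₂ (-s) ω₂) x) y < 1 / (n + 1) := by
    obtain ⟨b, hb, hyb⟩ := Metric.mem_closure_iff.1
      (omegaLimit_subset_closure_pullbackOrbit (T + n) hy) (1 / (n + 1)) Nat.one_div_pos_of_nat
    obtain ⟨s, hs, x, hx, rfl⟩ := mem_pullbackOrbit.1 hb
    exact ⟨s, hs, x, hx, by rwa [dist_comm]⟩
  choose s hs x hx hdist using approx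
  refine ⟨s, x, fun n => (le_add_of_nonneg_right n.cast_nonneg).trans (hs n),
    tendsto_atTop_mono hs (tendsto_atTop_add_const_left _ T tendsto_natCast_atTop_atTop), hx, ?_⟩
  exact tendsto_iff_dist_tendsto_zero.2 (squeeze_zero (fun _ => dist_nonneg)
    (fun n => (hdist n).le) tendsto_one_div_add_atTop_nhds_zero_nat)

end PullbackOrbit

section Cocycle

variable {Ω₁ Ω₂ X : Type*} [MetricSpace X] [MeasurableSpace X] [MeasurableSpace Ω₂]
  {θ₁ : ℝ → Ω₁ → Ω₁} {θ₂ : ℝ → Ω₂ → Ω₂} {Φ : ℝ → Ω₁ → Ω₂ → X → X} {B : Ω₁ → Ω₂ → Set X}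
  {t : ℝ}

theorem IsCocycle.pullback_shift (hΦ : IsCocycle θ₁ θ₂ Φ) (hθ₁ : IsGroupAction θ₁)
    (hθ₂ : IsGroupAction θ₂) {s : ℝ} (ht : 0 ≤ t) (hts : t ≤ s) (ω₁ : Ω₁) (ω₂ : Ω₂) (x : X) :
    Φ s (θ₁ (-s) (θ₁ t ω₁)) (θ₂ (-s) (θ₂ t ω₂)) x =
      Φ t ω₁ ω₂ (Φ (s - t) (θ₁ (-(s - t)) ω₁) (θ₂ (-(s - t)) ω₂) x) := by
  have h := hΦ.cocycle t (s - t) ht (sub_nonneg.2 hts) (θ₁ (-(s - t)) ω₁) (θ₂ (-(s - t)) ω₂) x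
  rw [add_sub_cancel, hθ₁.apply_apply, hθ₂.apply_apply, neg_add_cancel, hθ₁.1, hθ₂.1] at h
  rw [hθ₁.neg_apply_apply, hθ₂.neg_apply_apply, h]

theorem IsCocycle.image_pullbackOrbit_subset (hΦ : IsCocycle θ₁ θ₂ Φ) (hθ₁ : IsGroupAction θ₁)
    (hθ₂ : IsGroupAction θ₂) {τ : ℝ} (ht : 0 ≤ t) (hτ : 0 ≤ τ) (ω₁ : Ω₁) (ω₂ : Ω₂) :
    Φ t ω₁ ω₂ '' pullbackOrbit θ₁ θ₂ Φ B τ ω₁ ω₂ ⊆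
      pullbackOrbit θ₁ θ₂ Φ B (τ + t) (θ₁ t ω₁) (θ₂ t ω₂) := by
  rintro _ ⟨_, hy, rfl⟩
  obtain ⟨s, hs, x, hx, rfl⟩ := mem_pullbackOrbit.1 hy
  have hts : t ≤ s + t := le_add_of_nonneg_left (hτ.trans hs)
  refine mem_pullbackOrbit.2 ⟨s + t, add_le_add_left hs t, x, ?_, ?_⟩
  · rwa [hθ₁.neg_apply_apply, hθ₂.neg_apply_apply, add_sub_cancel_right]
  · rw [hΦ.pullback_shift hθ₁ hθ₂ ht hts, add_sub_cancel_right]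

theorem IsCocycle.image_omegaLimit_subset (hΦ : IsCocycle θ₁ θ₂ Φ) (hθ₁ : IsGroupAction θ₁)
    (hθ₂ : IsGroupAction θ₂) (ht : 0 ≤ t) (ω₁ : Ω₁) (ω₂ : Ω₂) :
    Φ t ω₁ ω₂ '' omegaLimit θ₁ θ₂ Φ B ω₁ ω₂ ⊆ omegaLimit θ₁ θ₂ Φ B (θ₁ t ω₁) (θ₂ t ω₂) := by
  rintro _ ⟨y, hy, rfl⟩
  refine mem_iInter₂.2 fun τ hτ => ?_
  have hΦy : Φ t ω₁ ω₂ y ∈ closure (Φ t ω₁ ω₂ '' pullbackOrbit θ₁ θ₂ Φ B τ ω₁ ω₂) :=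
    image_closure_subset_closure_image (hΦ.continuous t ht ω₁ ω₂)
      (mem_image_of_mem _ (omegaLimit_subset_closure_pullbackOrbit τ hy))
  exact closure_mono ((hΦ.image_pullbackOrbit_subset hθ₁ hθ₂ ht hτ ω₁ ω₂).trans
    (pullbackOrbit_antitone (le_add_of_nonneg_right ht))) hΦy

theorem IsCocycle.omegaLimit_subset_image (hΦ : IsCocycle θ₁ θ₂ Φ) (hθ₁ : IsGroupAction θ₁)
    (hθ₂ : IsGroupAction θ₂) {𝒟 : Set (Ω₁ → Ω₂ → Set X)}
    (hac : AsymptoticallyCompact θ₁ θ₂ Φ 𝒟) (hB : B ∈ 𝒟) (ht : 0 ≤ t) (ω₁ : Ω₁) (ω₂ : Ω₂) :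
    omegaLimit θ₁ θ₂ Φ B (θ₁ t ω₁) (θ₂ t ω₂) ⊆ Φ t ω₁ ω₂ '' omegaLimit θ₁ θ₂ Φ B ω₁ ω₂ := by
  intro y hy
  obtain ⟨s, x, hts, hs, hx, hy⟩ := exists_tendsto_of_mem_omegaLimit hy t
  have hσ : Tendsto (fun n => s n - t) atTop atTop := tendsto_atTop_add_const_right _ _ hs
  have hxσ (n : ℕ) : x n ∈ B (θ₁ (-(s n - t)) ω₁) (θ₂ (-(s n - t)) ω₂) := by
    simpa only [hθ₁.neg_apply_apply, hθ₂.neg_apply_apply] using hx n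
  obtain ⟨φ, z, hφ, hz⟩ := hac ω₁ ω₂ B hB _ x hσ hxσ
  refine ⟨z, mem_omegaLimit_of_tendsto (hσ.comp hφ.tendsto_atTop) (fun n => hxσ (φ n)) hz, ?_⟩
  refine tendsto_nhds_unique (((hΦ.continuous t ht ω₁ ω₂).tendsto z).comp hz) ?_
  simpa only [Function.comp_def, hΦ.pullback_shift hθ₁ hθ₂ ht (hts _)] using
    hy.comp hφ.tendsto_atTop

end Cocycle

theorem omegaLimit_invariant_general
    {Ω₁ Ω₂ X : Type*} [MetricSpace X] [MeasurableSpace X] [MeasurableSpace Ω₂]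
    (θ₁ : ℝ → Ω₁ → Ω₁) (θ₂ : ℝ → Ω₂ → Ω₂)
    (hθ₁ : IsGroupAction θ₁) (hθ₂ : IsGroupAction θ₂)
    (Φ : ℝ → Ω₁ → Ω₂ → X → X)
    (hΦ : IsCocycle θ₁ θ₂ Φ)
    (𝒟 : Set (Ω₁ → Ω₂ → Set X))
    (hac : AsymptoticallyCompact θ₁ θ₂ Φ 𝒟)
    (D : Ω₁ → Ω₂ → Set X) (hD : D ∈ 𝒟)
    (hDcl : ∀ (ω₁ : Ω₁) (ω₂ : Ω₂), IsClosed (D ω₁ ω₂))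
    (habs : ∀ (ω₁ : Ω₁) (ω₂ : Ω₂), ∃ t₀ : ℝ, 0 ≤ t₀ ∧ ∀ t : ℝ, t₀ ≤ t →
      Φ t (θ₁ (-t) ω₁) (θ₂ (-t) ω₂) '' D (θ₁ (-t) ω₁) (θ₂ (-t) ω₂) ⊆ D ω₁ ω₂) :
    Invariant θ₁ θ₂ Φ (fun ω₁ ω₂ => omegaLimit θ₁ θ₂ Φ D ω₁ ω₂) ∧
      ∀ (ω₁ : Ω₁) (ω₂ : Ω₂), omegaLimit θ₁ θ₂ Φ D ω₁ ω₂ ⊆ D ω₁ ω₂ := by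
  refine ⟨fun t ht ω₁ ω₂ => ?_, fun ω₁ ω₂ => ?_⟩
  · exact (hΦ.image_omegaLimit_subset hθ₁ hθ₂ ht ω₁ ω₂).antisymm
      (hΦ.omegaLimit_subset_image hθ₁ hθ₂ hac hD ht ω₁ ω₂)
  · obtain ⟨t₀, -, hD_absorbs⟩ := habs ω₁ ω₂
    exact omegaLimit_subset_of_pullbackOrbit_subset (hDcl ω₁ ω₂) (iUnion₂_subset hD_absorbs)

theorem omegaLimit_invariant
    {Ω₁ Ω₂ X : Type*} [Nonempty Ω₁]
    [MetricSpace X] [CompleteSpace X] [SecondCountableTopology X]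
    [MeasurableSpace X] [BorelSpace X]
    [MeasurableSpace Ω₂] (P : Measure Ω₂) [IsProbabilityMeasure P]
    (θ₁ : ℝ → Ω₁ → Ω₁) (θ₂ : ℝ → Ω₂ → Ω₂)
    (hθ₁ : IsGroupAction θ₁) (hθ₂ : IsGroupAction θ₂)
    (hθ₂meas : Measurable fun p : ℝ × Ω₂ => θ₂ p.1 p.2)
    (hθ₂pres : ∀ t : ℝ, MeasurePreserving (θ₂ t) P P)
    (Φ : ℝ → Ω₁ → Ω₂ → X → X)
    (hΦ : IsCocycle θ₁ θ₂ Φ)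
    (𝒟 : Set (Ω₁ → Ω₂ → Set X))
    (h𝒟ne : FamiliesOfNonemptySets 𝒟)
    (hac : AsymptoticallyCompact θ₁ θ₂ Φ 𝒟)
    (D : Ω₁ → Ω₂ → Set X) (hD : D ∈ 𝒟)
    (hDcl : ∀ (ω₁ : Ω₁) (ω₂ : Ω₂), IsClosed (D ω₁ ω₂))
    (habs : ∀ (ω₁ : Ω₁) (ω₂ : Ω₂), ∃ t₀ : ℝ, 0 ≤ t₀ ∧ ∀ t : ℝ, t₀ ≤ t →
      Φ t (θ₁ (-t) ω₁) (θ₂ (-t) ω₂) '' D (θ₁ (-t) ω₁) (θ₂ (-t) ω₂) ⊆ D ω₁ ω₂) :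
    Invariant θ₁ θ₂ Φ (fun ω₁ ω₂ => omegaLimit θ₁ θ₂ Φ D ω₁ ω₂) ∧
      ∀ (ω₁ : Ω₁) (ω₂ : Ω₂), omegaLimit θ₁ θ₂ Φ D ω₁ ω₂ ⊆ D ω₁ ω₂ :=
  omegaLimit_invariant_general θ₁ θ₂ hθ₁ hθ₂ Φ hΦ 𝒟 hac D hD hDcl habs

end RDS
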